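/- Assume hypotheses (Lip) and (F), and assume in addition that Σ is uniformly bounded from above: there exists n > 0 such that Σ[μ](x) ≤ n for all μ ∈ M₊(X) and all x ∈ X. Then for every nonnegative finite initial measure μ₀ and every final time T > 0 there exists a unique family (μ_t)_{0≤t≤T} ∈ C([0,T]; M(X)) satisfying, for every t ∈ [0,T] and every bounded Borel function f, ⟨μ_t, f⟩ = ∫_X f(x) e^{∫_0^t Σ[μ_s](x) ds} dμ₀(x); moreover every measure of this family has the same support as μ₀. -/

import Mathlib

open MeasureTheory Filter Set

/-- Total variation distance between two (Borel) measures, `‖μ - ν‖_TV`. -/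
noncomputable def tvDist {Y : Type*} [MeasurableSpace Y] (μ ν : Measure Y) : ℝ :=
  ((μ - ν) Set.univ + (ν - μ) Set.univ).toReal

/-- `f` is a bounded Borel function. -/
def IsBoundedBorel {Y : Type*} [MeasurableSpace Y] (f : Y → ℝ) : Prop :=
  Measurable f ∧ ∃ C, ∀ x, |f x| ≤ C

/-- Hypothesis (Lip): for every `r > 0` there is `k r > 0`, with `k` locally bounded on
`(0,∞)`, such that `‖Σ[μ] - Σ[ν]‖_∞ ≤ k r * ‖μ - ν‖_TV` whenever `‖μ‖_TV, ‖ν‖_TV ≤ r`. -/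
def HypLip {Y : Type*} [MeasurableSpace Y] (Sig : FiniteMeasure Y → Y → ℝ) : Prop :=
  ∃ k : ℝ → ℝ, (∀ r > 0, 0 < k r) ∧ (∀ R > 0, ∃ K, ∀ r ∈ Set.Ioc (0:ℝ) R, k r ≤ K) ∧
    ∀ r > 0, ∀ μ ν : FiniteMeasure Y, (μ.mass : ℝ) ≤ r → (ν.mass : ℝ) ≤ r →
      ∀ x, |Sig μ x - Sig ν x| ≤ k r * tvDist (μ : Measure Y) (ν : Measure Y)

/-- Hypothesis (F) with constant `F`: `⟨μ, Σ[μ]⟩ ≤ F·μ(X)` for all finite nonnegative `μ`. -/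
def HypF {Y : Type*} [MeasurableSpace Y] (Sig : FiniteMeasure Y → Y → ℝ) (F : ℝ) : Prop :=
  ∀ μ : FiniteMeasure Y, ∫ x, Sig μ x ∂(μ : Measure Y) ≤ F * (μ.mass : ℝ)

/-- The support of a measure: points all of whose neighbourhoods have positive measure. -/
def msupport {Y : Type*} [TopologicalSpace Y] [MeasurableSpace Y] (μ : Measure Y) : Set Y :=
  {x | ∀ U ∈ nhds x, μ U ≠ 0}

/-- A family `(μ_t)_{0≤t≤T}` in `C([0,T]; M(X))` (continuity in total variation norm)
satisfying the fixed-point identity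
`⟨μ_t, f⟩ = ∫_X f(x) e^{∫_0^t Σ[μ_s](x) ds} dμ₀(x)` for all bounded Borel `f`. -/
def IsSemigroupFixedPoint {Y : Type*} [MeasurableSpace Y] [TopologicalSpace Y]
    (Sig : FiniteMeasure Y → Y → ℝ) (μ₀ : FiniteMeasure Y)
    (μ : ℝ → FiniteMeasure Y) (T : ℝ) : Prop :=
  (∀ t₀ ∈ Set.Icc (0:ℝ) T,
    Tendsto (fun t => tvDist (μ t : Measure Y) (μ t₀ : Measure Y))
      (nhdsWithin t₀ (Set.Icc 0 T)) (nhds 0)) ∧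
  ∀ f : Y → ℝ, IsBoundedBorel f → ∀ t ∈ Set.Icc (0:ℝ) T,
    ∫ x, f x ∂(μ t : Measure Y)
      = ∫ x, f x * Real.exp (∫ s in (0:ℝ)..t, Sig (μ s) x) ∂(μ₀ : Measure Y)

open Topology ENNReal BoundedContinuousFunction

namespace SelFP

set_option linter.unusedSectionVars false

def Disc (α : Type*) := α
instance {α : Type*} : TopologicalSpace (Disc α) := ⊥
instance {α : Type*} : DiscreteTopology (Disc α) := ⟨rfl⟩
instance {α : Type*} [m : MeasurableSpace α] : MeasurableSpace (Disc α) := m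

variable {Y : Type*} [MeasurableSpace Y]

noncomputable def mkB (g : Y → ℝ) (C : ℝ) (hC : ∀ x, |g x| ≤ C) : Disc Y →ᵇ ℝ :=
  BoundedContinuousFunction.ofNormedAddCommGroup g continuous_of_discreteTopology C
    (fun x => by simpa [Real.norm_eq_abs] using hC x)

def Bm (Y : Type*) [MeasurableSpace Y] : Submodule ℝ (Disc Y →ᵇ ℝ) where
  carrier := {f | Measurable (f : Y → ℝ)}
  add_mem' := by
    intro f g hf hg
    simpa [BoundedContinuousFunction.coe_add] using Measurable.add hf hg
  zero_mem' := by
    have : ((0 : Disc Y →ᵇ ℝ) : Y → ℝ) = fun _ => 0 := rfl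
    rw [Set.mem_setOf_eq, this]
    exact measurable_const
  smul_mem' := by
    intro c f hf
    simpa [BoundedContinuousFunction.coe_smul] using hf.const_mul c

lemma isClosed_Bm : IsClosed (Bm Y : Set (Disc Y →ᵇ ℝ)) := by
  rw [← isSeqClosed_iff_isClosed]
  intro f g hf hfg
  have : ∀ x : Disc Y, Tendsto (fun i => f i x) atTop (𝓝 (g x)) := by
    intro x
    exact ((BoundedContinuousFunction.evalCLM (𝕜 := ℝ) x).continuous.tendsto _).comp hfg
  exact measurable_of_tendsto_metrizable (fun i => hf i) (tendsto_pi_nhds.2 this)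

instance : CompleteSpace (Bm Y) := (isClosed_Bm (Y := Y)).completeSpace_coe

noncomputable instance : ENormedAddMonoid (Bm Y) := @NormedAddGroup.toENormedAddMonoid (Bm Y) _

lemma eval_intervalIntegral (F : ℝ → Bm Y) {a b : ℝ}
    (hF : IntervalIntegrable F MeasureTheory.volume a b) (x : Y) :
    ((((∫ s in a..b, F s) : Bm Y) : Disc Y →ᵇ ℝ)) x
      = ∫ s in a..b, (((F s : Bm Y) : Disc Y →ᵇ ℝ)) x := by
  let ℓ : Bm Y →ₗ[ℝ] ℝ :=
    { toFun := fun f => ((f : Disc Y →ᵇ ℝ)) x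
      map_add' := fun f g => rfl
      map_smul' := fun r f => rfl }
  have hb : ∀ f : Bm Y, ‖ℓ f‖ ≤ 1 * ‖f‖ := by
    intro f
    rw [one_mul]
    exact BoundedContinuousFunction.norm_coe_le_norm (f : Disc Y →ᵇ ℝ) x
  have h := ContinuousLinearMap.intervalIntegral_comp_comm (𝕜 := ℝ) (E := Bm Y) (F := ℝ)
    (ℓ.mkContinuous 1 hb) hF
  exact h.symm

lemma continuous_evalBm (x : Y) : Continuous (fun f : Bm Y => ((f : Disc Y →ᵇ ℝ)) x) := by
  have h1 : Continuous (fun f : Bm Y => (f : Disc Y →ᵇ ℝ)) := continuous_subtype_val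
  exact (continuous_eval_const (F := Disc Y →ᵇ ℝ) x).comp h1



lemma tvDist_nonneg (μ ν : Measure Y) : 0 ≤ tvDist μ ν := ENNReal.toReal_nonneg

lemma tvDist_le_mass (μ ν : Measure Y) [IsFiniteMeasure μ] [IsFiniteMeasure ν] :
    tvDist μ ν ≤ (μ univ).toReal + (ν univ).toReal := by
  have h1 : (μ - ν) univ ≤ μ univ := Measure.sub_le univ
  have h2 : (ν - μ) univ ≤ ν univ := Measure.sub_le univ
  have := ENNReal.toReal_mono (a := (μ - ν) univ + (ν - μ) univ) (b := μ univ + ν univ)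
    (by finiteness) (add_le_add h1 h2)
  calc tvDist μ ν ≤ (μ univ + ν univ).toReal := this
    _ = (μ univ).toReal + (ν univ).toReal := ENNReal.toReal_add (by finiteness) (by finiteness)

lemma sub_withDensity_le (μ : Measure Y) {f g : Y → ℝ≥0∞}
    (hf : Measurable f) (hg : Measurable g) :
    (μ.withDensity f - μ.withDensity g) univ ≤ ∫⁻ x, f x - g x ∂μ := by
  have hle : μ.withDensity f ≤ μ.withDensity (fun x => f x - g x) + μ.withDensity g := by
    rw [show (fun x => f x - g x) = f - g from rfl, ← withDensity_add_left (hf.sub hg) g]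
    exact withDensity_mono (Filter.Eventually.of_forall (fun x => le_tsub_add))
  calc (μ.withDensity f - μ.withDensity g) univ
      ≤ μ.withDensity (fun x => f x - g x) univ := by
        exact Measure.sub_le_of_le_add hle univ
    _ = ∫⁻ x, f x - g x ∂μ := by
        rw [withDensity_apply _ MeasurableSet.univ, Measure.restrict_univ]

lemma tvDist_withDensity_le (μ : Measure Y) [IsFiniteMeasure μ] {f g : Y → ℝ≥0∞}
    (hf : Measurable f) (hg : Measurable g) {c : ℝ} (hc : 0 ≤ c)
    (h1 : ∀ x, f x ≤ g x + ENNReal.ofReal c) (h2 : ∀ x, g x ≤ f x + ENNReal.ofReal c) :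
    tvDist (μ.withDensity f) (μ.withDensity g) ≤ 2 * c * (μ univ).toReal := by
  have key : ∀ (u v : Y → ℝ≥0∞), Measurable u → Measurable v →
      (∀ x, u x ≤ v x + ENNReal.ofReal c) →
      (μ.withDensity u - μ.withDensity v) univ ≤ ENNReal.ofReal c * μ univ := by
    intro u v hu hv h
    calc (μ.withDensity u - μ.withDensity v) univ ≤ ∫⁻ x, u x - v x ∂μ :=
          sub_withDensity_le μ hu hv
      _ ≤ ∫⁻ _, ENNReal.ofReal c ∂μ :=
          lintegral_mono (fun x => tsub_le_iff_left.2 ((h x).trans (by rw [add_comm])))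
      _ = ENNReal.ofReal c * μ univ := lintegral_const _
  have hA := key f g hf hg h1
  have hB := key g f hg hf h2
  have hfin : ENNReal.ofReal c * μ univ ≠ ∞ := by finiteness
  calc tvDist (μ.withDensity f) (μ.withDensity g)
      ≤ (ENNReal.ofReal c * μ univ + ENNReal.ofReal c * μ univ).toReal :=
        ENNReal.toReal_mono (by finiteness) (add_le_add hA hB)
    _ = 2 * c * (μ univ).toReal := by
        rw [← two_mul, ← mul_assoc, ENNReal.toReal_mul, ENNReal.toReal_mul,
          ENNReal.toReal_ofReal hc, ENNReal.toReal_ofNat]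

lemma abs_min_sub_min {a b c : ℝ} : |min a c - min b c| ≤ |a - b| := by
  simp only [min_def]
  split_ifs <;> rw [abs_le] <;> constructor <;>
    linarith [le_abs_self (a-b), neg_abs_le (a-b)]

lemma exp_le_exp_add {p q K δ : ℝ} (hp : p ≤ K) (hpq : |p - q| ≤ δ) :
    Real.exp p ≤ Real.exp q + Real.exp K * δ := by
  have hδ : 0 ≤ δ := le_trans (abs_nonneg _) hpq
  rcases le_total p q with h | h
  · have := Real.exp_le_exp.2 h
    nlinarith [Real.exp_pos K, Real.exp_pos p]
  · have h1 : q - p + 1 ≤ Real.exp (q - p) := Real.add_one_le_exp _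
    have h2 : Real.exp (q - p) * Real.exp p = Real.exp q := by
      rw [← Real.exp_add]; ring_nf
    have h3 : p - q ≤ δ := le_trans (le_abs_self _) hpq
    have h4 : Real.exp p ≤ Real.exp K := Real.exp_le_exp.2 hp
    nlinarith [Real.exp_pos p, Real.exp_pos q]


section defs

variable (Sig : FiniteMeasure Y → Y → ℝ) (hB : ∀ μ, IsBoundedBorel (Sig μ))

/-- `Σ[μ]` as an element of the bounded measurable functions. -/
noncomputable def sigB (μ : FiniteMeasure Y) : Bm Y :=
  ⟨mkB (Sig μ) (hB μ).2.choose (hB μ).2.choose_spec, (hB μ).1⟩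

@[simp] lemma sigB_apply (μ : FiniteMeasure Y) (x : Y) :
    ((sigB Sig hB μ : Disc Y →ᵇ ℝ) : Y → ℝ) x = Sig μ x := rfl

/-- density `e^{min(f, c)}` -/
noncomputable def dens (c : ℝ) (f : Bm Y) (x : Y) : ℝ≥0∞ :=
  ENNReal.ofReal (Real.exp (min (((f : Disc Y →ᵇ ℝ)) x) c))

lemma dens_measurable (c : ℝ) (f : Bm Y) : Measurable (dens c f) :=
  ((f.2.min measurable_const).exp).ennreal_ofReal

lemma dens_le (c : ℝ) (f : Bm Y) (x : Y) :
    dens c f x ≤ ENNReal.ofReal (Real.exp c) :=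
  ENNReal.ofReal_le_ofReal (Real.exp_le_exp.2 (min_le_right _ _))

lemma withDensity_univ_le (μ₀ : FiniteMeasure Y) (c : ℝ) (f : Bm Y) :
    (μ₀ : Measure Y).withDensity (dens c f) univ
      ≤ ENNReal.ofReal (Real.exp c) * (μ₀ : Measure Y) univ := by
  rw [withDensity_apply _ MeasurableSet.univ, Measure.restrict_univ]
  calc ∫⁻ x, dens c f x ∂(μ₀ : Measure Y)
      ≤ ∫⁻ _, ENNReal.ofReal (Real.exp c) ∂(μ₀ : Measure Y) := lintegral_mono (dens_le c f)
    _ = ENNReal.ofReal (Real.exp c) * (μ₀ : Measure Y) univ := lintegral_const _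

/-- the measure `e^{min(f,c)}·μ₀` -/
noncomputable def Mf (μ₀ : FiniteMeasure Y) (c : ℝ) (f : Bm Y) : FiniteMeasure Y :=
  ⟨(μ₀ : Measure Y).withDensity (dens c f),
    ⟨lt_of_le_of_lt (withDensity_univ_le μ₀ c f) (by finiteness)⟩⟩

lemma Mf_coe (μ₀ : FiniteMeasure Y) (c : ℝ) (f : Bm Y) :
    (Mf μ₀ c f : Measure Y) = (μ₀ : Measure Y).withDensity (dens c f) := rfl

lemma Mf_mass_le (μ₀ : FiniteMeasure Y) (c : ℝ) (f : Bm Y) :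
    ((Mf μ₀ c f).mass : ℝ) ≤ Real.exp c * ((μ₀ : Measure Y) univ).toReal := by
  have h1 : ((Mf μ₀ c f).mass : ℝ) = ((Mf μ₀ c f : Measure Y) univ).toReal := rfl
  rw [h1, Mf_coe]
  calc ((μ₀ : Measure Y).withDensity (dens c f) univ).toReal
      ≤ (ENNReal.ofReal (Real.exp c) * (μ₀ : Measure Y) univ).toReal :=
        ENNReal.toReal_mono (by finiteness) (withDensity_univ_le μ₀ c f)
    _ = Real.exp c * ((μ₀ : Measure Y) univ).toReal := by
        rw [ENNReal.toReal_mul, ENNReal.toReal_ofReal (Real.exp_nonneg c)]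

lemma tvDist_Mf_le (μ₀ : FiniteMeasure Y) {c : ℝ} (hc : 0 ≤ c) (f g : Bm Y) :
    tvDist (Mf μ₀ c f : Measure Y) (Mf μ₀ c g : Measure Y)
      ≤ 2 * (Real.exp c * dist f g) * ((μ₀ : Measure Y) univ).toReal := by
  have hkey : ∀ u v : Bm Y, ∀ x,
      dens c u x ≤ dens c v x + ENNReal.ofReal (Real.exp c * dist u v) := by
    intro u v x
    have hd : |min (((u : Disc Y →ᵇ ℝ)) x) c - min (((v : Disc Y →ᵇ ℝ)) x) c|
        ≤ dist u v := by
      refine le_trans abs_min_sub_min ?_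
      rw [← Real.dist_eq]
      have := BoundedContinuousFunction.dist_coe_le_dist
        (f := (u : Disc Y →ᵇ ℝ)) (g := (v : Disc Y →ᵇ ℝ)) x
      simpa [Subtype.dist_eq] using this
    have hexp := exp_le_exp_add (min_le_right (((u : Disc Y →ᵇ ℝ)) x) c) hd
    calc dens c u x ≤ ENNReal.ofReal (Real.exp (min (((v : Disc Y →ᵇ ℝ)) x) c)
          + Real.exp c * dist u v) := ENNReal.ofReal_le_ofReal hexp
      _ ≤ dens c v x + ENNReal.ofReal (Real.exp c * dist u v) := ENNReal.ofReal_add_le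
  rw [Mf_coe, Mf_coe]
  exact tvDist_withDensity_le _ (dens_measurable c f) (dens_measurable c g)
    (mul_nonneg (Real.exp_nonneg c) dist_nonneg) (hkey f g) (fun x => by
      simpa [dist_comm] using hkey g f x)

lemma integral_Mf (μ₀ : FiniteMeasure Y) (c : ℝ) (f : Bm Y) (g : Y → ℝ) :
    ∫ x, g x ∂(Mf μ₀ c f : Measure Y)
      = ∫ x, g x * Real.exp (min (((f : Disc Y →ᵇ ℝ)) x) c) ∂(μ₀ : Measure Y) := by
  have hmeas : Measurable fun x => Real.toNNReal (Real.exp (min (((f : Disc Y →ᵇ ℝ)) x) c)) :=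
    ((f.2.min measurable_const).exp).real_toNNReal
  have hcoe : (Mf μ₀ c f : Measure Y) = (μ₀ : Measure Y).withDensity
      (fun x => ((Real.exp (min (((f : Disc Y →ᵇ ℝ)) x) c)).toNNReal : ℝ≥0∞)) := rfl
  rw [hcoe]
  refine (integral_withDensity_eq_integral_smul hmeas g).trans ?_
  refine integral_congr_ae (Filter.Eventually.of_forall fun x => ?_)
  simp only [NNReal.smul_def, smul_eq_mul,
    Real.coe_toNNReal _ (Real.exp_nonneg _), mul_comm]

lemma eq_withDensity (μ₀ : FiniteMeasure Y) (ρ : Measure Y) [IsFiniteMeasure ρ]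
    {E : Y → ℝ} (hE : Measurable E) {C : ℝ} (hEb : ∀ x, E x ≤ C)
    (h : ∀ f : Y → ℝ, IsBoundedBorel f →
      ∫ x, f x ∂ρ = ∫ x, f x * Real.exp (E x) ∂(μ₀ : Measure Y)) :
    ρ = (μ₀ : Measure Y).withDensity (fun x => ENNReal.ofReal (Real.exp (E x))) := by
  have hfin : ∀ U : Set Y, (μ₀ : Measure Y).withDensity
      (fun x => ENNReal.ofReal (Real.exp (E x))) U ≠ ∞ := by
    intro U
    refine ne_top_of_le_ne_top (b := ENNReal.ofReal (Real.exp C) * (μ₀ : Measure Y) univ)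
      (by finiteness) ?_
    refine le_trans (measure_mono (subset_univ U)) ?_
    rw [withDensity_apply _ MeasurableSet.univ, Measure.restrict_univ]
    calc ∫⁻ x, ENNReal.ofReal (Real.exp (E x)) ∂(μ₀ : Measure Y)
        ≤ ∫⁻ _, ENNReal.ofReal (Real.exp C) ∂(μ₀ : Measure Y) :=
          lintegral_mono fun x => ENNReal.ofReal_le_ofReal (Real.exp_le_exp.2 (hEb x))
      _ = ENNReal.ofReal (Real.exp C) * (μ₀ : Measure Y) univ := lintegral_const _
  ext U hU
  have hbb : IsBoundedBorel (U.indicator (fun _ => (1:ℝ))) := by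
    refine ⟨measurable_const.indicator hU, 1, fun x => ?_⟩
    by_cases hx : x ∈ U <;> simp [hx]
  have h1 := h _ hbb
  have hL : ∫ x, U.indicator (fun _ => (1:ℝ)) x ∂ρ = (ρ U).toReal := by
    exact integral_indicator_one (μ := ρ) hU
  have hprod : (fun x => U.indicator (fun _ => (1:ℝ)) x * Real.exp (E x))
      = U.indicator (fun x => Real.exp (E x)) := by
    funext x; by_cases hx : x ∈ U <;> simp [hx]
  have hR : ∫ x, U.indicator (fun _ => (1:ℝ)) x * Real.exp (E x) ∂(μ₀ : Measure Y)
      = ((μ₀ : Measure Y).withDensity (fun x => ENNReal.ofReal (Real.exp (E x))) U).toReal := by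
    rw [hprod, integral_indicator hU, withDensity_apply _ hU,
      integral_eq_lintegral_of_nonneg_ae
        (Filter.Eventually.of_forall fun x => Real.exp_nonneg _)
        (hE.exp.aestronglyMeasurable.restrict)]
  rw [hL, hR] at h1
  exact (ENNReal.toReal_eq_toReal_iff' (measure_ne_top ρ U) (hfin U)).1 h1

end defs


end SelFP
open SelFP in
set_option maxHeartbeats 1000000 in
/-- Under (Lip), (F), and a uniform upper bound `Σ[μ](x) ≤ n`, for every
nonnegative finite `μ₀` and `T > 0` there is a unique family in `C([0,T];M(X))` satisfying
`⟨μ_t, f⟩ = ∫ f e^{∫_0^t Σ[μ_s] ds} dμ₀`; moreover every `μ_t` has the same support as `μ₀`. -/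
theorem selection_fixed_point {d : ℕ} (X : Set (EuclideanSpace ℝ (Fin d)))
    (hX : IsCompact X)
    (Sig : FiniteMeasure X → X → ℝ) (hB : ∀ μ, IsBoundedBorel (Sig μ))
    (hLip : HypLip Sig) (hF : ∃ F > 0, HypF Sig F)
    (n : ℝ) (hn : 0 < n) (hbd : ∀ (μ : FiniteMeasure X) (x : X), Sig μ x ≤ n)
    (μ₀ : FiniteMeasure X) (T : ℝ) (hT : 0 < T) :
    ∃ μ : ℝ → FiniteMeasure X, IsSemigroupFixedPoint Sig μ₀ μ T ∧
      (∀ t ∈ Set.Icc (0:ℝ) T, msupport (μ t : Measure X) = msupport (μ₀ : Measure X)) ∧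
      ∀ ν : ℝ → FiniteMeasure X, IsSemigroupFixedPoint Sig μ₀ ν T →
        ∀ t ∈ Set.Icc (0:ℝ) T, ν t = μ t := by
  classical
  obtain ⟨k, hkpos, hkbd, hk⟩ := hLip
  set c : ℝ := n * T with hcdef
  have hc0 : 0 ≤ c := (mul_pos hn hT).le
  set M : ℝ := ((μ₀ : Measure X) univ).toReal with hMdef
  have hM0 : 0 ≤ M := ENNReal.toReal_nonneg
  set r : ℝ := Real.exp c * M + 1 with hrdef
  have hr0 : 0 < r := by positivity
  have hmassMf : ∀ f : Bm X, ((Mf μ₀ c f).mass : ℝ) ≤ r :=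
    fun f => (Mf_mass_le μ₀ c f).trans (by rw [hrdef]; linarith)
  set L : ℝ := k r * (2 * Real.exp c * M) with hLdef
  have hL0 : 0 ≤ L := mul_nonneg (hkpos r hr0).le (by positivity)
  set G : Bm X → Bm X := fun f => sigB Sig hB (Mf μ₀ c f) with hGdef
  have hGapp : ∀ (f : Bm X) (x : X), ((G f : Disc X →ᵇ ℝ)) x = Sig (Mf μ₀ c f) x :=
    fun _ _ => rfl
  have hGdist : ∀ f g, dist (G f) (G g) ≤ L * dist f g := by
    intro f g
    rw [Subtype.dist_eq, BoundedContinuousFunction.dist_le (by positivity)]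
    intro x
    have h1 := hk r hr0 _ _ (hmassMf f) (hmassMf g) x
    have h2 := tvDist_Mf_le μ₀ hc0 f g
    have h3 : tvDist (Mf μ₀ c f : Measure X) (Mf μ₀ c g : Measure X)
        ≥ 0 := tvDist_nonneg _ _
    have hkr := (hkpos r hr0).le
    calc dist (((G f : Disc X →ᵇ ℝ)) x) (((G g : Disc X →ᵇ ℝ)) x)
        = |Sig (Mf μ₀ c f) x - Sig (Mf μ₀ c g) x| := Real.dist_eq _ _
      _ ≤ k r * tvDist (Mf μ₀ c f : Measure X) (Mf μ₀ c g : Measure X) := h1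
      _ ≤ k r * (2 * (Real.exp c * dist f g) * M) := by
          exact mul_le_mul_of_nonneg_left h2 hkr
      _ = L * dist f g := by rw [hLdef]; ring
  have hGlip : LipschitzWith (Real.toNNReal L) G :=
    LipschitzWith.of_dist_le_mul fun f g => by
      rw [Real.coe_toNNReal L hL0]; exact hGdist f g
  -- the Picard operator
  set pI : ℝ → Set.Icc (0:ℝ) T := fun s => Set.projIcc 0 T hT.le s with hpIdef
  have hpi_coe : ∀ t ∈ Set.Icc (0:ℝ) T, ((pI t : ℝ)) = t := by
    intro t ht; rw [hpIdef]; simp [Set.projIcc_of_mem hT.le ht]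
  have hcont_integrand : ∀ u : C(Set.Icc (0:ℝ) T, Bm X),
      Continuous fun s : ℝ => G (u (pI s)) :=
    fun u => hGlip.continuous.comp (u.continuous.comp continuous_projIcc)
  have hII : ∀ (u : C(Set.Icc (0:ℝ) T, Bm X)) (a b : ℝ),
      IntervalIntegrable (fun s => G (u (pI s))) MeasureTheory.volume a b :=
    fun u a b => by have h := Continuous.intervalIntegrable (E := Bm X) (μ := MeasureTheory.volume) (hcont_integrand u) a b; exact h
  set Φ : C(Set.Icc (0:ℝ) T, Bm X) → C(Set.Icc (0:ℝ) T, Bm X) := fun u =>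
    ⟨fun t => ∫ s in (0:ℝ)..(t:ℝ), G (u (pI s)),
      (intervalIntegral.continuous_primitive (fun a b => hII u a b) 0).comp
        continuous_subtype_val⟩ with hΦdef
  have hΦ_apply : ∀ u t, Φ u t = ∫ s in (0:ℝ)..(t:ℝ), G (u (pI s)) := fun u t => rfl
  -- the contraction estimate
  have key : ∀ (m : ℕ) (u v : C(Set.Icc (0:ℝ) T, Bm X)) (t : Set.Icc (0:ℝ) T),
      dist (Φ^[m] u t) (Φ^[m] v t)
        ≤ L ^ m * (t:ℝ) ^ m / (Nat.factorial m) * dist u v := by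
    intro m
    induction m with
    | zero =>
      intro u v t
      simpa using ContinuousMap.dist_apply_le_dist t
    | succ m ih =>
      intro u v t
      have ht0 : (0:ℝ) ≤ t := t.2.1
      have htT : (t:ℝ) ≤ T := t.2.2
      have hiter : ∀ z, Φ^[m+1] z t = Φ (Φ^[m] z) t := by
        intro z; rw [Function.iterate_succ_apply']
      set U := Φ^[m] u with hU
      set V := Φ^[m] v with hV
      rw [hiter u, hiter v]
      have hsub : Φ U t - Φ V t
          = ∫ s in (0:ℝ)..(t:ℝ), (G (U (pI s)) - G (V (pI s))) := by
        rw [hΦ_apply, hΦ_apply, ← intervalIntegral.integral_sub (hII U 0 t) (hII V 0 t)]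
      have hdn := dist_eq_norm (Φ U t) (Φ V t)
      rw [hsub] at hdn
      refine le_trans (le_of_eq hdn) ?_
      have hgcont : Continuous
          (fun s : ℝ => L * (L ^ m * s ^ m / (Nat.factorial m) * dist u v)) := by
        fun_prop
      have hbound := intervalIntegral.norm_integral_le_of_norm_le
        (f := fun s => G (U (pI s)) - G (V (pI s)))
        (g := fun s => L * (L ^ m * s ^ m / (Nat.factorial m) * dist u v))
        (a := 0) (b := (t:ℝ)) (μ := MeasureTheory.volume)
        ht0 ?_ (hgcont.intervalIntegrable 0 t)
      · refine hbound.trans ?_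
        have hval : ∫ s in (0:ℝ)..(t:ℝ), L * (L ^ m * s ^ m / (Nat.factorial m) * dist u v)
            = L ^ (m+1) * (t:ℝ) ^ (m+1) / (Nat.factorial (m+1)) * dist u v := by
          have hrw : (fun s : ℝ => L * (L ^ m * s ^ m / (Nat.factorial m) * dist u v))
              = fun s : ℝ => (L * (L ^ m / (Nat.factorial m) * dist u v)) * s ^ m := by
            funext s; ring
          rw [hrw, intervalIntegral.integral_const_mul, integral_pow]
          have hfact : ((Nat.factorial (m+1) : ℝ)) = (m+1) * (Nat.factorial m) := by
            push_cast [Nat.factorial_succ]; ring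
          have hfm : ((Nat.factorial m : ℝ)) ≠ 0 := by positivity
          rw [hfact]
          field_simp
          ring
        rw [hval]
      · refine Filter.Eventually.of_forall fun s hs => ?_
        have hsIcc : s ∈ Set.Icc (0:ℝ) T := ⟨hs.1.le, hs.2.trans htT⟩
        have hpI : pI s = ⟨s, hsIcc⟩ := by rw [hpIdef]; exact Set.projIcc_of_mem hT.le hsIcc
        have h2 := ih u v ⟨s, hsIcc⟩
        rw [← hU, ← hV] at h2
        calc ‖G (U (pI s)) - G (V (pI s))‖
            = dist (G (U (pI s))) (G (V (pI s))) := (dist_eq_norm (G (U (pI s))) (G (V (pI s)))).symm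
          _ ≤ L * dist (U (pI s)) (V (pI s)) := hGdist _ _
          _ ≤ L * (L ^ m * s ^ m / (Nat.factorial m) * dist u v) := by
              rw [hpI]; exact mul_le_mul_of_nonneg_left h2 hL0
  have hdistm : ∀ (m : ℕ) (u v : C(Set.Icc (0:ℝ) T, Bm X)),
      dist (Φ^[m] u) (Φ^[m] v) ≤ (L ^ m * T ^ m / (Nat.factorial m)) * dist u v := by
    intro m u v
    haveI : Nonempty (Set.Icc (0:ℝ) T) := ⟨⟨0, le_refl 0, hT.le⟩⟩
    rw [ContinuousMap.dist_le (by positivity)]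
    intro t
    refine (key m u v t).trans ?_
    have hpow : ((t:ℝ)) ^ m ≤ T ^ m := pow_le_pow_left₀ t.2.1 t.2.2 m
    have hD : (0:ℝ) ≤ dist u v := dist_nonneg
    have hfm : (0:ℝ) < (Nat.factorial m : ℝ) := by positivity
    exact mul_le_mul_of_nonneg_right
      ((div_le_div_iff_of_pos_right hfm).2 (mul_le_mul_of_nonneg_left hpow (pow_nonneg hL0 m))) hD
  -- choose a contracting iterate
  obtain ⟨m, hm⟩ : ∃ m : ℕ, L ^ m * T ^ m / (Nat.factorial m) < 1 := by
    have h := FloorSemiring.tendsto_pow_div_factorial_atTop (K := ℝ) (L * T)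
    obtain ⟨m, hm⟩ := (h.eventually_lt_const one_pos).exists
    exact ⟨m, by rwa [mul_pow] at hm⟩
  haveI : Nonempty C(Set.Icc (0:ℝ) T, Bm X) := ⟨ContinuousMap.const _ 0⟩
  have hκ0 : (0:ℝ) ≤ L ^ m * T ^ m / (Nat.factorial m) := by positivity
  have hΦm : ContractingWith (Real.toNNReal (L ^ m * T ^ m / (Nat.factorial m))) (Φ^[m]) := by
    constructor
    · exact_mod_cast Real.toNNReal_lt_one.2 hm
    · exact LipschitzWith.of_dist_le_mul fun u v => by
        rw [Real.coe_toNNReal _ hκ0]; exact hdistm m u v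
  set w : C(Set.Icc (0:ℝ) T, Bm X) := hΦm.fixedPoint (Φ^[m]) with hwdef
  have hw : Φ w = w := hΦm.isFixedPt_fixedPoint_iterate
  have huniq : ∀ v, Φ v = v → v = w := by
    intro v hv
    exact hΦm.fixedPoint_unique (Function.IsFixedPt.iterate hv m)
  -- pointwise description of w
  have hwval : ∀ (t : Set.Icc (0:ℝ) T) (x : X),
      ((w t : Disc X →ᵇ ℝ)) x = ∫ s in (0:ℝ)..(t:ℝ), Sig (Mf μ₀ c (w (pI s))) x := by
    intro t x
    conv_lhs => rw [← hw]
    rw [hΦ_apply]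
    exact eval_intervalIntegral (fun s => G (w (pI s))) (hII w 0 t) x
  have hwII : ∀ (x : X) (a b : ℝ),
      IntervalIntegrable (fun s => Sig (Mf μ₀ c (w (pI s))) x) MeasureTheory.volume a b := by
    intro x a b
    have hcont : Continuous fun s : ℝ => ((G (w (pI s)) : Disc X →ᵇ ℝ)) x :=
      (continuous_evalBm x).comp (hcont_integrand w)
    exact hcont.intervalIntegrable a b
  have hwle : ∀ (t : Set.Icc (0:ℝ) T) (x : X), ((w t : Disc X →ᵇ ℝ)) x ≤ n * t := by
    intro t x
    rw [hwval t x]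
    have h1 : ∫ s in (0:ℝ)..(t:ℝ), Sig (Mf μ₀ c (w (pI s))) x
        ≤ ∫ _ in (0:ℝ)..(t:ℝ), n :=
      intervalIntegral.integral_mono_on t.2.1 (hwII x 0 t)
        intervalIntegrable_const (fun s _ => hbd _ x)
    simpa [intervalIntegral.integral_const, smul_eq_mul, mul_comm] using h1
  have hwlec : ∀ (t : Set.Icc (0:ℝ) T) (x : X), ((w t : Disc X →ᵇ ℝ)) x ≤ c := by
    intro t x
    refine (hwle t x).trans ?_
    rw [hcdef]
    exact mul_le_mul_of_nonneg_left t.2.2 hn.le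
  have hmin : ∀ (t : Set.Icc (0:ℝ) T) (x : X),
      min (((w t : Disc X →ᵇ ℝ)) x) c = ((w t : Disc X →ᵇ ℝ)) x :=
    fun t x => min_eq_left (hwlec t x)
  -- the solution family
  set μt : ℝ → FiniteMeasure X := fun t => Mf μ₀ c (w (pI t)) with hμtdef
  have hexp_eq : ∀ t ∈ Set.Icc (0:ℝ) T, ∀ x : X,
      (∫ s in (0:ℝ)..t, Sig (μt s) x) = ((w (pI t) : Disc X →ᵇ ℝ)) x := by
    intro t ht x
    rw [hwval (pI t) x, hpi_coe t ht]
  have hident : ∀ f : X → ℝ, IsBoundedBorel f → ∀ t ∈ Set.Icc (0:ℝ) T,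
      ∫ x, f x ∂(μt t : Measure X)
        = ∫ x, f x * Real.exp (∫ s in (0:ℝ)..t, Sig (μt s) x) ∂(μ₀ : Measure X) := by
    intro f hf t ht
    rw [hμtdef]
    refine (integral_Mf μ₀ c (w (pI t)) f).trans ?_
    refine MeasureTheory.integral_congr_ae (Filter.Eventually.of_forall fun x => ?_)
    show f x * Real.exp (min (((w (pI t) : Disc X →ᵇ ℝ)) x) c)
        = f x * Real.exp (∫ s in (0:ℝ)..t, Sig (μt s) x)
    rw [hmin (pI t) x, hexp_eq t ht x]
  -- TV-continuity
  have hcontt : ∀ t₀ ∈ Set.Icc (0:ℝ) T,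
      Tendsto (fun t => tvDist (μt t : Measure X) (μt t₀ : Measure X))
        (nhdsWithin t₀ (Set.Icc 0 T)) (nhds 0) := by
    intro t₀ ht₀
    have hb : ∀ t, tvDist (μt t : Measure X) (μt t₀ : Measure X)
        ≤ (2 * Real.exp c * M) * dist (w (pI t)) (w (pI t₀)) := by
      intro t
      have h2 := tvDist_Mf_le μ₀ hc0 (w (pI t)) (w (pI t₀))
      calc tvDist (μt t : Measure X) (μt t₀ : Measure X)
          ≤ 2 * (Real.exp c * dist (w (pI t)) (w (pI t₀))) * M := h2
        _ = (2 * Real.exp c * M) * dist (w (pI t)) (w (pI t₀)) := by ring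
    have hcontw : Continuous fun t : ℝ => w (pI t) :=
      w.continuous.comp continuous_projIcc
    have hd : Tendsto (fun t => dist (w (pI t)) (w (pI t₀)))
        (nhdsWithin t₀ (Set.Icc 0 T)) (nhds 0) := by
      have h1 : Tendsto (fun t : ℝ => w (pI t)) (nhdsWithin t₀ (Set.Icc 0 T))
          (nhds (w (pI t₀))) := ((hcontw.tendsto t₀).mono_left nhdsWithin_le_nhds)
      simpa [dist_self] using h1.dist (tendsto_const_nhds (x := w (pI t₀)))
    have := hd.const_mul (2 * Real.exp c * M)
    rw [mul_zero] at this
    exact squeeze_zero (fun t => tvDist_nonneg _ _) hb this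
  -- support equality
  have hkey0 : ∀ t : ℝ, ∀ U : Set X, MeasurableSet U →
      ((μt t : Measure X) U = 0 ↔ (μ₀ : Measure X) U = 0) := by
    intro t U hU
    have hcoe : (μt t : Measure X) = (μ₀ : Measure X).withDensity (dens c (w (pI t))) := rfl
    rw [hcoe, withDensity_apply _ hU, lintegral_eq_zero_iff (dens_measurable c (w (pI t)))]
    have hpos : ∀ x : X, dens c (w (pI t)) x ≠ 0 := by
      intro x
      exact (ENNReal.ofReal_pos.2 (Real.exp_pos _)).ne'
    constructor
    · intro h
      have := MeasureTheory.ae_iff.1 h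
      have hset : {x : X | ¬ dens c (w (pI t)) x = (0 : X → ℝ≥0∞) x} = univ :=
        eq_univ_of_forall fun x => by simpa using hpos x
      rwa [hset, Measure.restrict_apply_univ] at this
    · intro h
      have : (μ₀ : Measure X).restrict U = 0 := by
        rw [Measure.restrict_eq_zero]; exact h
      rw [this]
      simp
      exact Filter.eventually_bot
  have hsupp : ∀ t ∈ Set.Icc (0:ℝ) T,
      msupport (μt t : Measure X) = msupport (μ₀ : Measure X) := by
    intro t _
    ext x
    simp only [msupport, mem_setOf_eq]
    constructor
    · intro h U hUx
      obtain ⟨V, hVU, hVopen, hxV⟩ := mem_nhds_iff.1 hUx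
      have h1 : (μt t : Measure X) V ≠ 0 := h V (hVopen.mem_nhds hxV)
      intro hU0
      have hV0 : (μ₀ : Measure X) V = 0 :=
        le_antisymm (le_trans (measure_mono hVU) hU0.le) zero_le
      exact h1 ((hkey0 t V hVopen.measurableSet).2 hV0)
    · intro h U hUx
      obtain ⟨V, hVU, hVopen, hxV⟩ := mem_nhds_iff.1 hUx
      have h1 : (μ₀ : Measure X) V ≠ 0 := h V (hVopen.mem_nhds hxV)
      intro hU0
      have hV0 : (μt t : Measure X) V = 0 :=
        le_antisymm (le_trans (measure_mono hVU) hU0.le) zero_le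
      exact h1 ((hkey0 t V hVopen.measurableSet).1 hV0)
  refine ⟨μt, ⟨hcontt, hident⟩, hsupp, ?_⟩
  -- uniqueness
  intro ν hν
  obtain ⟨hνc, hνi⟩ := hν
  have hνle : ∀ s ∈ Set.Icc (0:ℝ) T, ∀ x : X,
      (∫ u in (0:ℝ)..s, Sig (ν u) x) ≤ n * s := by
    intro s hs x
    by_cases hInt : IntervalIntegrable (fun u => Sig (ν u) x) MeasureTheory.volume 0 s
    · have h1 := intervalIntegral.integral_mono_on hs.1 hInt intervalIntegrable_const
        (fun u _ => hbd (ν u) x)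
      simpa [intervalIntegral.integral_const, smul_eq_mul, mul_comm] using h1
    · rw [intervalIntegral.integral_undef hInt]
      exact mul_nonneg hn.le hs.1
  have hmassν : ∀ s ∈ Set.Icc (0:ℝ) T, ((ν s).mass : ℝ) ≤ r := by
    intro s hs
    have h1 := hνi (fun _ => (1:ℝ)) ⟨measurable_const, 1, fun _ => by norm_num⟩ s hs
    have hmass : ((ν s).mass : ℝ) = ∫ _, (1:ℝ) ∂(ν s : Measure X) := by
      simp [MeasureTheory.integral_const, smul_eq_mul]
      rfl
    set g : X → ℝ := fun x => Real.exp (∫ u in (0:ℝ)..s, Sig (ν u) x) with hgdef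
    have hgle : ∀ x, g x ≤ Real.exp c := by
      intro x
      refine Real.exp_le_exp.2 ((hνle s hs x).trans ?_)
      rw [hcdef]
      exact mul_le_mul_of_nonneg_left hs.2 hn.le
    have h2 : ∫ x, (1:ℝ) * g x ∂(μ₀ : Measure X) = ∫ x, g x ∂(μ₀ : Measure X) := by
      simp
    rw [hmass, h1, h2]
    by_cases hInt : MeasureTheory.Integrable g (μ₀ : Measure X)
    · have h3 : ∫ x, g x ∂(μ₀ : Measure X) ≤ ∫ _, Real.exp c ∂(μ₀ : Measure X) :=
        MeasureTheory.integral_mono hInt (MeasureTheory.integrable_const _) hgle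
      refine h3.trans ?_
      rw [MeasureTheory.integral_const, smul_eq_mul, hrdef, measureReal_def, ← hMdef]
      nlinarith [Real.exp_pos c]
    · rw [MeasureTheory.integral_undef hInt]
      exact hr0.le
  -- the trajectory of ν in Bm
  set Hν : ℝ → Bm X := fun s => sigB Sig hB (ν (pI s : ℝ)) with hHνdef
  have hHνapp : ∀ (s : ℝ) (x : X), ((Hν s : Disc X →ᵇ ℝ)) x = Sig (ν (pI s : ℝ)) x :=
    fun _ _ => rfl
  have hHνcont : Continuous Hν := by
    rw [continuous_iff_continuousAt]
    intro s₀
    have htv0 : Tendsto (fun u : ℝ => tvDist (ν u : Measure X) (ν (pI s₀ : ℝ) : Measure X))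
        (nhdsWithin (pI s₀ : ℝ) (Set.Icc 0 T)) (nhds 0) := hνc _ (pI s₀).2
    have hval : Tendsto (Subtype.val : Set.Icc (0:ℝ) T → ℝ) (nhds (pI s₀))
        (nhdsWithin (pI s₀ : ℝ) (Set.Icc 0 T)) := by
      rw [← map_nhds_subtype_val]
      exact le_rfl
    have htv1 : Tendsto (fun σ : Set.Icc (0:ℝ) T =>
        tvDist (ν (σ:ℝ) : Measure X) (ν (pI s₀ : ℝ) : Measure X)) (nhds (pI s₀)) (nhds 0) :=
      htv0.comp hval
    have hpc : Tendsto pI (nhds s₀) (nhds (pI s₀)) := (continuous_projIcc).tendsto s₀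
    have htv : Tendsto (fun s : ℝ =>
        tvDist (ν (pI s : ℝ) : Measure X) (ν (pI s₀ : ℝ) : Measure X)) (nhds s₀) (nhds 0) :=
      htv1.comp hpc
    have hb : ∀ s : ℝ, dist (Hν s) (Hν s₀)
        ≤ k r * tvDist (ν (pI s : ℝ) : Measure X) (ν (pI s₀ : ℝ) : Measure X) := by
      intro s
      rw [Subtype.dist_eq, BoundedContinuousFunction.dist_le
        (mul_nonneg (hkpos r hr0).le (tvDist_nonneg _ _))]
      intro x
      have h2 := hk r hr0 _ _ (hmassν _ (pI s).2) (hmassν _ (pI s₀).2) x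
      calc dist (((Hν s : Disc X →ᵇ ℝ)) x) (((Hν s₀ : Disc X →ᵇ ℝ)) x)
          = |Sig (ν (pI s : ℝ)) x - Sig (ν (pI s₀ : ℝ)) x| := Real.dist_eq _ _
        _ ≤ _ := h2
    have hd : Tendsto (fun s => dist (Hν s) (Hν s₀)) (nhds s₀) (nhds 0) := by
      have h3 := htv.const_mul (k r)
      rw [mul_zero] at h3
      exact squeeze_zero (fun s => dist_nonneg) hb h3
    rw [ContinuousAt, tendsto_iff_dist_tendsto_zero]
    exact hd
  have hHνII : ∀ a b : ℝ, IntervalIntegrable Hν MeasureTheory.volume a b :=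
    fun a b => by have h := Continuous.intervalIntegrable (E := Bm X) (μ := MeasureTheory.volume) hHνcont a b; exact h
  set Vν : C(Set.Icc (0:ℝ) T, Bm X) :=
    ⟨fun t => ∫ s in (0:ℝ)..(t:ℝ), Hν s,
      (intervalIntegral.continuous_primitive (fun a b => hHνII a b) 0).comp
        continuous_subtype_val⟩ with hVνdef
  have hVval : ∀ (t : Set.Icc (0:ℝ) T) (x : X),
      ((Vν t : Disc X →ᵇ ℝ)) x = ∫ s in (0:ℝ)..(t:ℝ), Sig (ν s) x := by
    intro t x
    have h1 : ((Vν t : Disc X →ᵇ ℝ)) x = ∫ s in (0:ℝ)..(t:ℝ), ((Hν s : Disc X →ᵇ ℝ)) x :=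
      eval_intervalIntegral Hν (hHνII 0 t) x
    rw [h1]
    refine intervalIntegral.integral_congr ?_
    intro s hs
    rw [Set.uIcc_of_le t.2.1] at hs
    have hsIcc : s ∈ Set.Icc (0:ℝ) T := ⟨hs.1, hs.2.trans t.2.2⟩
    show Sig (ν (pI s : ℝ)) x = Sig (ν s) x
    rw [hpi_coe s hsIcc]
  have hVle : ∀ (t : Set.Icc (0:ℝ) T) (x : X), ((Vν t : Disc X →ᵇ ℝ)) x ≤ c := by
    intro t x
    rw [hVval t x]
    refine (hνle t t.2 x).trans ?_
    rw [hcdef]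
    exact mul_le_mul_of_nonneg_left t.2.2 hn.le
  have hνd : ∀ t ∈ Set.Icc (0:ℝ) T, (ν t : Measure X)
      = (μ₀ : Measure X).withDensity
          (fun x => ENNReal.ofReal (Real.exp (((Vν (pI t) : Disc X →ᵇ ℝ)) x))) := by
    intro t ht
    refine eq_withDensity μ₀ _ ((Vν (pI t)).2) (C := c) (fun x => hVle (pI t) x) ?_
    intro f hf
    have h1 := hνi f hf t ht
    refine h1.trans ?_
    refine MeasureTheory.integral_congr_ae (Filter.Eventually.of_forall fun x => ?_)
    show f x * Real.exp (∫ s in (0:ℝ)..t, Sig (ν s) x)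
        = f x * Real.exp (((Vν (pI t) : Disc X →ᵇ ℝ)) x)
    rw [hVval (pI t) x, hpi_coe t ht]
  have hνMf : ∀ s : ℝ, ν (pI s : ℝ) = Mf μ₀ c (Vν (pI s)) := by
    intro s
    apply MeasureTheory.FiniteMeasure.toMeasure_injective
    have h1 := hνd (pI s : ℝ) (pI s).2
    have h2 : pI ((pI s : ℝ)) = pI s := by
      rw [hpIdef]; exact Set.projIcc_val hT.le (pI s)
    rw [h2] at h1
    rw [h1]
    show _ = (μ₀ : Measure X).withDensity (dens c (Vν (pI s)))
    congr 1
    funext x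
    rw [dens, min_eq_left (hVle (pI s) x)]
  have hΦV : Φ Vν = Vν := by
    apply ContinuousMap.ext
    intro t
    rw [hΦ_apply]
    have hint : (fun s : ℝ => G (Vν (pI s))) = Hν := by
      funext s
      rw [hGdef]
      show sigB Sig hB (Mf μ₀ c (Vν (pI s))) = sigB Sig hB (ν (pI s : ℝ))
      rw [← hνMf s]
    rw [hint]
    rfl
  have hVw : Vν = w := huniq Vν hΦV
  intro t ht
  have h1 : ν t = ν (pI t : ℝ) := by rw [hpi_coe t ht]
  rw [h1, hνMf t, hVw]
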